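/- arXiv:1403.6718 — 6 statements merged into one kernel-verified Lean document; each statement's English description precedes it below -/
import Mathlib

section
/- For 0 < p < 1, α > 0, and x ∈ ℝ, every minimizer t* of the one-dimensional function t ↦ (t - x)² + α|t|^p satisfies t* = 0 or |t*| ≥ γ_α, where γ_α = (α(1-p))^{1/(2-p)}. -/
/-!
A minimizer `t > 0` is stationary, `2 t (t - x) + α p t ^ p = 0`, and it beats `s = 0`,
`t ^ 2 - 2 t x + α t ^ p ≤ 0`. Eliminating `x` gives `α (1 - p) t ^ p ≤ t ^ 2`, i.e.
`α (1 - p) ≤ t ^ (2 - p)`. Negative minimizers reduce to positive ones via `s ↦ -s`, `x ↦ -x`.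
-/

open Filter Topology

lemma mul_sub_mul_add_mul_rpow_eq_zero_of_isMinimizer {α p x t : ℝ} (ht : 0 < t)
    (hmin : ∀ s : ℝ, (t - x) ^ 2 + α * |t| ^ p ≤ (s - x) ^ 2 + α * |s| ^ p) :
    2 * t * (t - x) + α * p * t ^ p = 0 := by
  have hderiv : HasDerivAt (fun s : ℝ => (s - x) ^ 2 + α * s ^ p)
      (2 * (t - x) + α * (p * t ^ (p - 1))) t := by
    refine (((hasDerivAt_id t).sub_const x).pow 2 |>.add
      ((Real.hasDerivAt_rpow_const (Or.inl ht.ne')).const_mul α)).congr_deriv ?_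
    simp
  have hlocal : IsLocalMin (fun s : ℝ => (s - x) ^ 2 + α * s ^ p) t := by
    filter_upwards [lt_mem_nhds ht] with s hs
    simpa only [abs_of_pos ht, abs_of_pos hs] using hmin s
  have hstat := hlocal.hasDerivAt_eq_zero hderiv
  have hpow : t * t ^ (p - 1) = t ^ p := by
    rw [mul_comm, ← Real.rpow_add_one ht.ne', sub_add_cancel]
  linear_combination t * hstat - α * p * hpow

lemma rpow_one_div_two_sub_le_of_isMinimizer {α p x t : ℝ} (hα : 0 < α) (hp0 : 0 < p)
    (hp1 : p < 1) (ht : 0 < t)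
    (hmin : ∀ s : ℝ, (t - x) ^ 2 + α * |t| ^ p ≤ (s - x) ^ 2 + α * |s| ^ p) :
    (α * (1 - p)) ^ ((1 : ℝ) / (2 - p)) ≤ t := by
  have hstat := mul_sub_mul_add_mul_rpow_eq_zero_of_isMinimizer ht hmin
  have hzero := hmin 0
  rw [abs_zero, Real.zero_rpow hp0.ne', abs_of_pos ht] at hzero
  have htp : 0 < t ^ p := Real.rpow_pos_of_pos ht p
  have hkey : α * (1 - p) ≤ t ^ (2 - p) := by
    rw [Real.rpow_sub ht, Real.rpow_two, le_div_iff₀ htp]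
    linear_combination hzero - hstat
  calc (α * (1 - p)) ^ ((1 : ℝ) / (2 - p))
      ≤ (t ^ (2 - p)) ^ ((1 : ℝ) / (2 - p)) :=
        Real.rpow_le_rpow (mul_pos hα (by linarith)).le hkey (div_nonneg zero_le_one (by linarith))
    _ = t := by
        rw [← Real.rpow_mul ht.le, mul_one_div_cancel (by linarith), Real.rpow_one]

theorem stmt_5 (α p x : ℝ) (hα : 0 < α) (hp0 : 0 < p) (hp1 : p < 1)
    (t : ℝ) (hmin : ∀ s : ℝ, (t - x) ^ 2 + α * |t| ^ p ≤ (s - x) ^ 2 + α * |s| ^ p) :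
    t = 0 ∨ (α * (1 - p)) ^ ((1 : ℝ) / (2 - p)) ≤ |t| := by
  rcases lt_trichotomy t 0 with htn | rfl | htp
  · have hmin_neg : ∀ s : ℝ, (-t - -x) ^ 2 + α * |-t| ^ p ≤ (s - -x) ^ 2 + α * |s| ^ p := by
      intro s
      calc (-t - -x) ^ 2 + α * |-t| ^ p = (t - x) ^ 2 + α * |t| ^ p := by rw [abs_neg]; ring
        _ ≤ (-s - x) ^ 2 + α * |-s| ^ p := hmin (-s)
        _ = (s - -x) ^ 2 + α * |s| ^ p := by rw [abs_neg]; ring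
    right
    rw [abs_of_neg htn]
    exact rpow_one_div_two_sub_le_of_isMinimizer hα hp0 hp1 (neg_pos.2 htn) hmin_neg
  · exact Or.inl rfl
  · right
    rw [abs_of_pos htp]
    exact rpow_one_div_two_sub_le_of_isMinimizer hα hp0 hp1 htp hmin
end

section
/- For 0 < p < 1, α > 0, and x ∈ ℝ with |x| < τ_α = ((2-p)/(2-2p))(α(1-p))^{1/(2-p)}, the unique global minimizer of t ↦ (t - x)² + α|t|^p is t = 0. -/
/-!
For `s = |t| > 0` the claim reduces to `2 |x| s < s² + α s^p`. Substituting `s = m r` with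
`m = (α (1 - p))^{1/(2-p)}`, the minimiser of `s ↦ s + α s^{p-1}`, this becomes
`(2 - p) r ≤ (1 - p) r² + r^p`, which is weighted AM-GM for `r` and `r^{p-1}` with weights
`(1 - p)/(2 - p)` and `1/(2 - p)`: their weighted geometric mean is `1`.
-/

open Real

lemma two_sub_mul_le_one_sub_mul_sq_add_rpow {p r : ℝ} (hp : p ≤ 1) (hr : 0 < r) :
    (2 - p) * r ≤ (1 - p) * r ^ 2 + r ^ p := by
  have h2p : 0 < 2 - p := by linarith
  have amgm := geom_mean_le_arith_mean2_weighted (w₁ := (1 - p) / (2 - p)) (w₂ := 1 / (2 - p))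
    (p₁ := r) (p₂ := r ^ (p - 1)) (div_nonneg (by linarith) h2p.le) (by positivity) hr.le
    (by positivity) (by field_simp; ring)
  have geom_mean_eq_one : r ^ ((1 - p) / (2 - p)) * (r ^ (p - 1)) ^ (1 / (2 - p)) = 1 := by
    rw [← rpow_mul hr.le, ← rpow_add hr,
      show (1 - p) / (2 - p) + (p - 1) * (1 / (2 - p)) = 0 by ring, rpow_zero]
  have hle : 2 - p ≤ (1 - p) * r + r ^ (p - 1) := by
    rw [geom_mean_eq_one] at amgm
    field_simp at amgm
    linarith
  calc (2 - p) * r ≤ ((1 - p) * r + r ^ (p - 1)) * r := mul_le_mul_of_nonneg_right hle hr.le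
    _ = (1 - p) * r ^ 2 + r ^ p := by rw [add_mul, ← rpow_add_one hr.ne', sub_add_cancel]; ring

lemma mul_le_sq_add_mul_rpow {α p s : ℝ} (hα : 0 < α) (hp : p < 1) (hs : 0 < s) :
    (2 - p) / (1 - p) * (α * (1 - p)) ^ ((1 : ℝ) / (2 - p)) * s ≤ s ^ 2 + α * s ^ p := by
  have h1p : 0 < 1 - p := by linarith
  set m := (α * (1 - p)) ^ ((1 : ℝ) / (2 - p))
  have hm : 0 < m := by positivity
  have hm_rpow : m ^ (2 - p) = α * (1 - p) := by
    rw [← rpow_mul (by positivity), one_div_mul_cancel (by linarith), rpow_one]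
  have hα_eq : α * m ^ p = m ^ 2 / (1 - p) := by
    rw [eq_div_iff h1p.ne', mul_right_comm, ← hm_rpow, ← rpow_add hm, sub_add_cancel,
      rpow_two]
  obtain ⟨r, hr, rfl⟩ : ∃ r, 0 < r ∧ s = m * r := ⟨s / m, div_pos hs hm, by field_simp⟩
  have key := two_sub_mul_le_one_sub_mul_sq_add_rpow hp.le hr
  rw [mul_rpow hm.le hr.le, ← mul_assoc α, hα_eq]
  calc (2 - p) / (1 - p) * m * (m * r) = m ^ 2 / (1 - p) * ((2 - p) * r) := by ring
    _ ≤ m ^ 2 / (1 - p) * ((1 - p) * r ^ 2 + r ^ p) := by gcongr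
    _ = (m * r) ^ 2 + m ^ 2 / (1 - p) * r ^ p := by field_simp

theorem stmt_6 (α p x : ℝ) (hα : 0 < α) (hp0 : 0 < p) (hp1 : p < 1)
    (hx : |x| < ((2 - p) / (2 - 2 * p)) * (α * (1 - p)) ^ ((1 : ℝ) / (2 - p))) :
    ∀ t : ℝ, t ≠ 0 →
      (0 - x) ^ 2 + α * |(0 : ℝ)| ^ p < (t - x) ^ 2 + α * |t| ^ p := by
  intro t ht
  have hs : 0 < |t| := abs_pos.mpr ht
  have h2x : 2 * |x| < (2 - p) / (1 - p) * (α * (1 - p)) ^ ((1 : ℝ) / (2 - p)) := by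
    rw [show (2 - p) / (1 - p) = 2 * ((2 - p) / (2 - 2 * p)) by
      field_simp [show (1 : ℝ) - p ≠ 0 by linarith]]
    linarith
  have hbound : 2 * |x| * |t| < t ^ 2 + α * |t| ^ p := by
    rw [← sq_abs t]
    exact (mul_lt_mul_of_pos_right h2x hs).trans_le (mul_le_sq_add_mul_rpow hα hp1 hs)
  have htx : t * x ≤ |t| * |x| := (le_abs_self _).trans (abs_mul t x).le
  rw [abs_zero, zero_rpow hp0.ne']
  nlinarith
end

section
/- For 0 < p < 1 and α > 0, if t* ≠ 0 is a local minimizer of g(t) = (t - x)² + α|t|^p for some x ∈ ℝ, then t* satisfies the stationarity equation t* + (αp/2) sgn(t*)|t*|^{p-1} = x and the second-order condition |t*| ≥ (αp(1-p)/2)^{1/(2-p)}. -/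
/-!
Away from the origin `g` is smooth, so a local minimizer `t ≠ 0` satisfies `g' t = 0` and
`g'' t ≥ 0`. Since `(-s - x)² + α|-s|^p = (s + x)² + α|s|^p`, reflecting `t` and `x` together
reduces to `t > 0`, where `g'' t = 2 - α p (1 - p) t ^ (p - 2)`; the curvature condition is then
`α p (1 - p) / 2 ≤ t ^ (2 - p)`.
-/

open Filter Topology Real

/-- If `f'' a < 0`, the second-derivative test makes `a` also a local maximum, so `f` is locally
constant and `f'' a = 0`. Continuity matters: otherwise `deriv f a = 0` can be a junk value. -/
theorem IsLocalMin.deriv_deriv_nonneg {f : ℝ → ℝ} {a : ℝ} (hmin : IsLocalMin f a)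
    (hc : ContinuousAt f a) : 0 ≤ deriv (deriv f) a := by
  by_contra! hneg
  have hmax : IsLocalMax f a := isLocalMax_of_deriv_deriv_neg hneg hmin.deriv_eq_zero hc
  have hconst : f =ᶠ[𝓝 a] fun _ => f a :=
    (hmin.and hmax).mono fun _ h => le_antisymm h.2 h.1
  have : deriv (deriv f) a = 0 := by
    rw [hconst.deriv.deriv_eq]
    simp
  exact hneg.ne this

section SmoothBranch

variable {α p x t : ℝ}

theorem hasDerivAt_sub_sq_add_mul_rpow (ht : 0 < t) :
    HasDerivAt (fun u : ℝ => (u - x) ^ 2 + α * u ^ p) (2 * (t - x) + α * p * t ^ (p - 1)) t := by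
  have hsq : HasDerivAt (fun u : ℝ => (u - x) ^ 2) (2 * (t - x)) t := by
    simpa using ((hasDerivAt_id t).sub_const x).fun_pow 2
  refine (hsq.fun_add ((hasDerivAt_rpow_const (Or.inl ht.ne')).const_mul α)).congr_deriv ?_
  ring

theorem hasDerivAt_two_mul_sub_add_mul_rpow (ht : 0 < t) :
    HasDerivAt (fun u : ℝ => 2 * (u - x) + α * p * u ^ (p - 1))
      (2 + α * p * (p - 1) * t ^ (p - 2)) t := by
  have hlin : HasDerivAt (fun u : ℝ => 2 * (u - x)) 2 t := by
    simpa using ((hasDerivAt_id t).sub_const x).const_mul 2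
  have hpow := (hasDerivAt_rpow_const (p := p - 1) (Or.inl ht.ne')).const_mul (α * p)
  refine (hlin.fun_add hpow).congr_deriv ?_
  rw [show p - 1 - 1 = p - 2 by ring]
  ring

theorem add_mul_rpow_eq_of_isLocalMin_sub_sq_add_mul_rpow (ht : 0 < t)
    (hmin : IsLocalMin (fun u : ℝ => (u - x) ^ 2 + α * u ^ p) t) :
    t + α * p / 2 * t ^ (p - 1) = x := by
  linear_combination hmin.hasDerivAt_eq_zero (hasDerivAt_sub_sq_add_mul_rpow ht) / 2

theorem le_rpow_of_isLocalMin_sub_sq_add_mul_rpow (ht : 0 < t)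
    (hmin : IsLocalMin (fun u : ℝ => (u - x) ^ 2 + α * u ^ p) t) :
    α * p * (1 - p) / 2 ≤ t ^ (2 - p) := by
  have hderiv : deriv (fun u : ℝ => (u - x) ^ 2 + α * u ^ p) =ᶠ[𝓝 t]
      fun u => 2 * (u - x) + α * p * u ^ (p - 1) := by
    filter_upwards [Ioi_mem_nhds ht] with u hu
    exact (hasDerivAt_sub_sq_add_mul_rpow hu).deriv
  have hsecond : 0 ≤ 2 + α * p * (p - 1) * t ^ (p - 2) := by
    rw [← (hasDerivAt_two_mul_sub_add_mul_rpow ht).deriv, ← hderiv.deriv_eq]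
    exact hmin.deriv_deriv_nonneg (hasDerivAt_sub_sq_add_mul_rpow ht).continuousAt
  have hinv : t ^ (p - 2) * t ^ (2 - p) = 1 := by
    rw [← rpow_add ht]
    simp
  nlinarith [rpow_pos_of_pos ht (2 - p)]

end SmoothBranch

/-- The objective `g(t) = (t - x)² + α|t|^p` of the paper. -/
noncomputable def proxObjective (α p x s : ℝ) : ℝ := (s - x) ^ 2 + α * |s| ^ p

section ProxObjective

variable {α p x t : ℝ}

theorem proxObjective_neg (s : ℝ) : proxObjective α p x (-s) = proxObjective α p (-x) s := by
  simp only [proxObjective, abs_neg]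
  ring

theorem IsLocalMin.proxObjective_neg (hmin : IsLocalMin (proxObjective α p x) t) :
    IsLocalMin (proxObjective α p (-x)) (-t) := by
  have := (neg_neg t).symm ▸ hmin
  simpa [Function.comp_def, _root_.proxObjective_neg] using
    this.comp_continuous continuous_neg.continuousAt

theorem proxObjective_eventuallyEq (ht : 0 < t) :
    proxObjective α p x =ᶠ[𝓝 t] fun u => (u - x) ^ 2 + α * u ^ p := by
  filter_upwards [Ioi_mem_nhds ht] with u hu
  rw [proxObjective, abs_of_pos hu]

theorem optimality_of_isLocalMin_proxObjective (hα : 0 < α) (hp0 : 0 < p) (hp1 : p < 1)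
    (ht : 0 < t) (hmin : IsLocalMin (proxObjective α p x) t) :
    t + α * p / 2 * t ^ (p - 1) = x ∧ (α * p * (1 - p) / 2) ^ ((1 : ℝ) / (2 - p)) ≤ t := by
  have hsmooth := hmin.congr (proxObjective_eventuallyEq ht)
  refine ⟨add_mul_rpow_eq_of_isLocalMin_sub_sq_add_mul_rpow ht hsmooth, ?_⟩
  have hc : 0 ≤ α * p * (1 - p) / 2 := by
    have : 0 < 1 - p := by linarith
    positivity
  rw [one_div, rpow_inv_le_iff_of_pos hc ht.le (by linarith)]
  exact le_rpow_of_isLocalMin_sub_sq_add_mul_rpow ht hsmooth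

end ProxObjective

theorem stmt_7 (α p x : ℝ) (hα : 0 < α) (hp0 : 0 < p) (hp1 : p < 1)
    (t : ℝ) (ht : t ≠ 0)
    (hmin : IsLocalMin (fun s : ℝ => (s - x) ^ 2 + α * |s| ^ p) t) :
    t + (α * p / 2) * Real.sign t * |t| ^ (p - 1) = x ∧
      (α * p * (1 - p) / 2) ^ ((1 : ℝ) / (2 - p)) ≤ |t| := by
  change IsLocalMin (proxObjective α p x) t at hmin
  rcases ht.lt_or_gt with hneg | hpos
  · obtain ⟨hstat, hcurv⟩ :=
      optimality_of_isLocalMin_proxObjective hα hp0 hp1 (neg_pos.mpr hneg) hmin.proxObjective_neg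
    rw [abs_of_neg hneg, sign_of_neg hneg]
    exact ⟨by linarith, hcurv⟩
  · obtain ⟨hstat, hcurv⟩ := optimality_of_isLocalMin_proxObjective hα hp0 hp1 hpos hmin
    rw [abs_of_pos hpos, sign_of_pos hpos]
    exact ⟨by linarith, hcurv⟩
end

section
/- Let β > 0 and x ∈ ℝ^M with ‖x‖₁ < β/2. Then the zero vector is the unique minimizer of v ↦ ‖v - x‖₂² + β‖v‖_∞ over ℝ^M. -/
/-! Expanding the square, `‖v - x‖₂² = ‖x‖₂² + ‖v‖₂² - 2⟪v, x⟫`, and Hölder's inequality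
`⟪v, x⟫ ≤ ‖v‖_∞ ‖x‖₁` give `‖v - x‖₂² + β‖v‖_∞ ≥ ‖x‖₂² + ‖v‖₂² + (β - 2‖x‖₁)‖v‖_∞`.
When `2‖x‖₁ ≤ β` this is at least `‖x‖₂² + ‖v‖₂²`, the value at `0` plus a term
that is positive unless `v = 0`. -/

open Finset

variable {ι : Type*} [Fintype ι]

theorem sum_mul_le_iSup_abs_mul_sum_abs (v x : ι → ℝ) :
    ∑ i, v i * x i ≤ (⨆ i, |v i|) * ∑ i, |x i| := by
  have hbdd : BddAbove (Set.range fun i => |v i|) := (Set.finite_range _).bddAbove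
  rw [mul_sum]
  refine sum_le_sum fun i _ => ?_
  calc v i * x i ≤ |v i| * |x i| := by rw [← abs_mul]; exact le_abs_self _
    _ ≤ (⨆ i, |v i|) * |x i| := by gcongr; exact le_ciSup hbdd i

theorem sum_sq_add_sum_sq_le_sum_sub_sq_add_mul_iSup_abs {β : ℝ} {x : ι → ℝ}
    (hx : 2 * ∑ i, |x i| ≤ β) (v : ι → ℝ) :
    ∑ i, x i ^ 2 + ∑ i, v i ^ 2 ≤ ∑ i, (v i - x i) ^ 2 + β * ⨆ i, |v i| := by
  have hsup : 0 ≤ ⨆ i, |v i| := Real.iSup_nonneg fun i => abs_nonneg (v i)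
  have hexpand : ∑ i, (v i - x i) ^ 2 = ∑ i, x i ^ 2 + ∑ i, v i ^ 2 - 2 * ∑ i, v i * x i := by
    simp only [mul_sum, ← sum_add_distrib, ← sum_sub_distrib]
    exact sum_congr rfl fun i _ => by ring
  have hholder := sum_mul_le_iSup_abs_mul_sum_abs v x
  nlinarith [mul_le_mul_of_nonneg_right hx hsup]

theorem sum_sq_pos_of_ne_zero {v : ι → ℝ} (hv : v ≠ 0) : 0 < ∑ i, v i ^ 2 := by
  obtain ⟨i, hi⟩ := Function.ne_iff.mp hv
  exact sum_pos' (fun j _ => sq_nonneg (v j)) ⟨i, mem_univ i, sq_pos_of_ne_zero hi⟩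

theorem stmt_8_general (M : ℕ) (β : ℝ) (x : Fin M → ℝ)
    (hx : ∑ i, |x i| < β / 2) :
    let f : (Fin M → ℝ) → ℝ := fun v => (∑ i, (v i - x i) ^ 2) + β * (⨆ i, |v i|)
    (∀ v, f 0 ≤ f v) ∧ ∀ v, v ≠ 0 → f 0 < f v := by
  intro f
  have hf0 : f 0 = ∑ i, x i ^ 2 := by simp [f, Real.iSup_const_zero]
  have hgain (v : Fin M → ℝ) : f 0 + ∑ i, v i ^ 2 ≤ f v :=
    hf0 ▸ sum_sq_add_sum_sq_le_sum_sub_sq_add_mul_iSup_abs (by linarith) v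
  refine ⟨fun v => ?_, fun v hv => ?_⟩
  · linarith [hgain v, sum_nonneg fun i (_ : i ∈ univ) => sq_nonneg (v i)]
  · linarith [hgain v, sum_sq_pos_of_ne_zero hv]

theorem stmt_8 (M : ℕ) (β : ℝ) (hβ : 0 < β) (x : Fin M → ℝ)
    (hx : ∑ i, |x i| < β / 2) :
    let f : (Fin M → ℝ) → ℝ := fun v => (∑ i, (v i - x i) ^ 2) + β * (⨆ i, |v i|)
    (∀ v, f 0 ≤ f v) ∧ ∀ v, v ≠ 0 → f 0 < f v :=
  stmt_8_general M β x hx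
end

section
/- Local convexity of the restricted functional: let Γ be finite, T : ℝ^Γ → H linear with ‖Tz‖² ≥ c‖z‖² for all z ∈ ℝ^Γ and some c > 0, let 0 < p < c with p < 1, α > 0, and let u* ∈ ℝ^Γ with |u*_λ| ≥ γ_α = (α(1-p))^{1/(2-p)} for all λ ∈ Γ. Then the Hessian of F(u) = ‖T(u+v) - y‖² + α Σ_λ |u_λ|^p at u*, namely 2T*T - αp(1-p)·diag(|u*_λ|^{p-2}), is positive definite: ⟨z, (2T*T - αp(1-p)diag(|u*|^{p-2})) z⟩ ≥ (c - p)‖z‖² for all z ∈ ℝ^Γ. -/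
/-! The weights `|u_λ|^(p-2)` of the penalty's Hessian are at most `γ_α^(p-2) = (α(1-p))⁻¹`,
so the penalty part is bounded by `p‖z‖²`, while `2‖Tz‖² ≥ c‖z‖²`. -/

theorem Real.rpow_sub_two_le_inv {a t p : ℝ} (ha : 0 < a) (hp : p < 2)
    (ht : a ^ (1 / (2 - p)) ≤ t) : t ^ (p - 2) ≤ a⁻¹ := by
  have hexp : 1 / (2 - p) * (p - 2) = -1 := by
    field_simp [(sub_pos.mpr hp).ne']
    ring
  calc t ^ (p - 2) ≤ (a ^ (1 / (2 - p))) ^ (p - 2) :=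
        Real.rpow_le_rpow_of_nonpos (Real.rpow_pos_of_pos ha _) ht (by linarith)
    _ = a⁻¹ := by rw [← Real.rpow_mul ha.le, hexp, Real.rpow_neg_one]

theorem EuclideanSpace.sum_mul_sq_le_mul_norm_sq {ι : Type*} [Fintype ι] {w : ι → ℝ}
    {M : ℝ} (hw : ∀ i, w i ≤ M) (z : EuclideanSpace ℝ ι) :
    ∑ i, w i * z i ^ 2 ≤ M * ‖z‖ ^ 2 := by
  rw [EuclideanSpace.real_norm_sq_eq, Finset.mul_sum]
  exact Finset.sum_le_sum fun i _ => mul_le_mul_of_nonneg_right (hw i) (sq_nonneg _)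

theorem stmt_17_general {Γ : Type*} [Fintype Γ] {H : Type*} [NormedAddCommGroup H]
    [InnerProductSpace ℝ H]
    (T : EuclideanSpace ℝ Γ →L[ℝ] H) (c α p : ℝ)
    (hT : ∀ z : EuclideanSpace ℝ Γ, c * ‖z‖ ^ 2 ≤ ‖T z‖ ^ 2)
    (hα : 0 < α) (hp0 : 0 < p) (hp1 : p < 1)
    (u : EuclideanSpace ℝ Γ)
    (hu : ∀ lam, (α * (1 - p)) ^ ((1 : ℝ) / (2 - p)) ≤ |u lam|) :
    ∀ z : EuclideanSpace ℝ Γ,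
      (c - p) * ‖z‖ ^ 2 ≤
        2 * ‖T z‖ ^ 2 - α * p * (1 - p) * ∑ lam, |u lam| ^ (p - 2) * (z lam) ^ 2 := by
  intro z
  have hA : 0 < α * (1 - p) := mul_pos hα (by linarith)
  have hweights : ∑ lam, |u lam| ^ (p - 2) * z lam ^ 2 ≤ (α * (1 - p))⁻¹ * ‖z‖ ^ 2 :=
    EuclideanSpace.sum_mul_sq_le_mul_norm_sq
      (fun lam => Real.rpow_sub_two_le_inv hA (by linarith) (hu lam)) z
  have hpenalty : α * p * (1 - p) * ∑ lam, |u lam| ^ (p - 2) * z lam ^ 2 ≤ p * ‖z‖ ^ 2 :=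
    calc α * p * (1 - p) * ∑ lam, |u lam| ^ (p - 2) * z lam ^ 2
        ≤ α * p * (1 - p) * ((α * (1 - p))⁻¹ * ‖z‖ ^ 2) :=
          mul_le_mul_of_nonneg_left hweights (mul_pos (mul_pos hα hp0) (sub_pos.mpr hp1)).le
      _ = p * ‖z‖ ^ 2 := by field_simp [(sub_pos.mpr hp1).ne']
  linarith [hT z, sq_nonneg ‖T z‖]

theorem stmt_17 {Γ : Type*} [Fintype Γ] {H : Type*} [NormedAddCommGroup H]
    [InnerProductSpace ℝ H]
    (T : EuclideanSpace ℝ Γ →L[ℝ] H) (c α p : ℝ) (hc : 0 < c)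
    (hT : ∀ z : EuclideanSpace ℝ Γ, c * ‖z‖ ^ 2 ≤ ‖T z‖ ^ 2)
    (hα : 0 < α) (hp0 : 0 < p) (hp1 : p < 1) (hpc : p < c)
    (u : EuclideanSpace ℝ Γ)
    (hu : ∀ lam, (α * (1 - p)) ^ ((1 : ℝ) / (2 - p)) ≤ |u lam|) :
    ∀ z : EuclideanSpace ℝ Γ,
      (c - p) * ‖z‖ ^ 2 ≤
        2 * ‖T z‖ ^ 2 - α * p * (1 - p) * ∑ lam, |u lam| ^ (p - 2) * (z lam) ^ 2 :=
  stmt_17_general T c α p hT hα hp0 hp1 u hu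
end

section
/- For a weakly null sequence (v^{(n)}) in ℓ₂(Λ) and a ∈ ℓ₂(Λ): if S : ℝ → ℝ satisfies |S(x) - S(y)| ≤ κ|x - y| for some κ < 1 whenever |x|, |y| ≤ 2K (where K bounds ‖v^{(n)}‖₂), and ‖ (S∘(a + v^{(n)}) - S∘a) - v^{(n)} ‖₂ → 0 componentwise-extended, then ‖v^{(n)}‖₂ → 0. -/
/-!
Off the finitely many coordinates where `|a λ| > K`, both `a λ` and `a λ + v⁽ⁿ⁾ λ` lie in
`[-2K, 2K]`, so the contraction property gives `(1 - κ) |v⁽ⁿ⁾ λ| ≤ |d⁽ⁿ⁾ λ|` for the defect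
`d⁽ⁿ⁾ λ = S (a λ + v⁽ⁿ⁾ λ) - S (a λ) - v⁽ⁿ⁾ λ`. Hence `‖v⁽ⁿ⁾‖²` is bounded by its mass on a fixed
finite set, which vanishes by weak convergence, plus `(1 - κ)⁻² ‖d⁽ⁿ⁾‖²`, which vanishes by hypothesis.
-/

open Filter Topology RealInnerProductSpace

namespace lp

variable {ι : Type*}

theorem summable_sq (f : lp (fun _ : ι => ℝ) 2) : Summable fun i => f i ^ 2 := by
  simpa only [real_inner_self_eq_norm_sq, Real.norm_eq_abs, sq_abs] using
    summable_inner (𝕜 := ℝ) f f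

theorem norm_sq_eq_tsum_sq (f : lp (fun _ : ι => ℝ) 2) : ‖f‖ ^ 2 = ∑' i, f i ^ 2 := by
  rw [← real_inner_self_eq_norm_sq, inner_eq_tsum]
  simp only [real_inner_self_eq_norm_sq, Real.norm_eq_abs, sq_abs]

theorem finite_setOf_lt_abs (a : lp (fun _ : ι => ℝ) 2) {K : ℝ} (hK : 0 < K) :
    {i | K < |a i|}.Finite := by
  have hsmall : ∀ᶠ i in cofinite, a i ^ 2 < K ^ 2 :=
    (summable_sq a).tendsto_cofinite_zero.eventually_lt_const (by positivity)
  refine (eventually_cofinite.mp hsmall).subset fun i (hi : K < |a i|) => not_lt.mpr ?_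
  simpa only [sq_abs] using (pow_lt_pow_left₀ hi hK.le two_ne_zero).le

theorem tendsto_apply_zero_of_tendsto_inner {v : ℕ → lp (fun _ : ι => ℝ) 2}
    (hweak : ∀ w, Tendsto (fun n => ⟪v n, w⟫) atTop (𝓝 0)) (i : ι) :
    Tendsto (fun n => v n i) atTop (𝓝 0) := by
  classical
  simpa [inner_single_right] using hweak (lp.single 2 i 1)

theorem tendsto_norm_zero_of_sq_le_off_finset {v : ℕ → lp (fun _ : ι => ℝ) 2} (F : Finset ι)
    (hcoord : ∀ i, Tendsto (fun n => v n i) atTop (𝓝 0)) {r : ℕ → ι → ℝ}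
    (hr_nonneg : ∀ n i, 0 ≤ r n i) (hr_summable : ∀ n, Summable (r n))
    (hr_lim : Tendsto (fun n => ∑' i, r n i) atTop (𝓝 0))
    (hle : ∀ n, ∀ i ∉ F, v n i ^ 2 ≤ r n i) :
    Tendsto (fun n => ‖v n‖) atTop (𝓝 0) := by
  have hbound : ∀ n, ‖v n‖ ^ 2 ≤ ∑ i ∈ F, v n i ^ 2 + ∑' i, r n i := by
    intro n
    rw [norm_sq_eq_tsum_sq, ← (summable_sq (v n)).sum_add_tsum_subtype_compl F]
    gcongr
    calc ∑' i : {i // i ∉ F}, v n i ^ 2 ≤ ∑' i : {i // i ∉ F}, r n i :=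
          ((summable_sq (v n)).subtype _).tsum_mono ((hr_summable n).subtype _)
            fun i => hle n i i.2
      _ ≤ ∑' i, r n i := (hr_summable n).tsum_subtype_le _ _ (hr_nonneg n)
  have hfinite : Tendsto (fun n => ∑ i ∈ F, v n i ^ 2) atTop (𝓝 0) := by
    simpa using tendsto_finsetSum F fun i _ => (hcoord i).pow 2
  have hsq : Tendsto (fun n => ‖v n‖ ^ 2) atTop (𝓝 0) :=
    squeeze_zero (fun n => sq_nonneg _) hbound (by simpa using hfinite.add hr_lim)
  simpa [Real.sqrt_sq (norm_nonneg _)] using hsq.sqrt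

end lp

section Defect

variable {κ s x : ℝ}

theorem sq_mul_sq_le_sq_sub (hκ : κ < 1) (hs : |s| ≤ κ * |x|) :
    (1 - κ) ^ 2 * x ^ 2 ≤ (s - x) ^ 2 := by
  have h : (1 - κ) * |x| ≤ |s - x| := by
    have := abs_sub_abs_le_abs_sub x s
    rw [abs_sub_comm] at this
    linarith
  calc (1 - κ) ^ 2 * x ^ 2 = ((1 - κ) * |x|) ^ 2 := by rw [mul_pow, sq_abs]
    _ ≤ |s - x| ^ 2 := pow_le_pow_left₀ (by nlinarith [abs_nonneg x]) h 2
    _ = (s - x) ^ 2 := sq_abs _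

theorem sq_sub_le_sq_mul_sq (hs : |s| ≤ κ * |x|) : (s - x) ^ 2 ≤ (1 + κ) ^ 2 * x ^ 2 := by
  have h : |s - x| ≤ (1 + κ) * |x| := by linarith [abs_sub s x]
  calc (s - x) ^ 2 = |s - x| ^ 2 := (sq_abs _).symm
    _ ≤ ((1 + κ) * |x|) ^ 2 := pow_le_pow_left₀ (abs_nonneg _) h 2
    _ = (1 + κ) ^ 2 * x ^ 2 := by rw [mul_pow, sq_abs]

end Defect

open RealInnerProductSpace in
theorem stmt_19_general {Λ : Type*}
    (a : lp (fun _ : Λ => ℝ) 2) (v : ℕ → lp (fun _ : Λ => ℝ) 2)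
    (K κ : ℝ) (hκ1 : κ < 1)
    (hK : ∀ n, ‖v n‖ ≤ K)
    (hweak : ∀ w : lp (fun _ : Λ => ℝ) 2,
      Filter.Tendsto (fun n => ⟪v n, w⟫) Filter.atTop (nhds 0))
    (S : ℝ → ℝ)
    (hS : ∀ x y : ℝ, |x| ≤ 2 * K → |y| ≤ 2 * K → |S x - S y| ≤ κ * |x - y|)
    (hmain : Filter.Tendsto
      (fun n => ∑' lam, (S (a lam + v n lam) - S (a lam) - v n lam) ^ 2)
      Filter.atTop (nhds 0)) :
    Filter.Tendsto (fun n => ‖v n‖) Filter.atTop (nhds 0) := by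
  obtain rfl | hKpos := (norm_nonneg _ |>.trans (hK 0)).eq_or_lt
  · exact squeeze_zero (fun _ => norm_nonneg _) hK tendsto_const_nhds
  set F := (lp.finite_setOf_lt_abs a hKpos).toFinset
  have hcontract : ∀ n, ∀ i ∉ F, |S (a i + v n i) - S (a i)| ≤ κ * |v n i| := by
    intro n i hi
    have ha : |a i| ≤ K := by simpa [F] using hi
    have hv : |v n i| ≤ K := (lp.norm_apply_le_norm two_ne_zero (v n) i).trans (hK n)
    simpa using hS (a i + v n i) (a i) (by linarith [abs_add_le (a i) (v n i)]) (by linarith)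
  -- `hmain` alone says nothing if the defects were not square-summable (`∑'` would be `0`).
  have hdefect_summable : ∀ n, Summable fun i => (S (a i + v n i) - S (a i) - v n i) ^ 2 :=
    fun n => .of_norm_bounded_eventually ((lp.summable_sq (v n)).mul_left ((1 + κ) ^ 2)) <|
      eventually_cofinite.mpr <| F.finite_toSet.subset fun i hi => by
        by_contra hiF
        exact hi <| by simpa using sq_sub_le_sq_mul_sq (hcontract n i hiF)
  have hgap : 0 < (1 - κ) ^ 2 := by nlinarith
  refine lp.tendsto_norm_zero_of_sq_le_off_finset F (lp.tendsto_apply_zero_of_tendsto_inner hweak)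
    (r := fun n i => ((1 - κ) ^ 2)⁻¹ * (S (a i + v n i) - S (a i) - v n i) ^ 2)
    (fun n i => by positivity) (fun n => (hdefect_summable n).mul_left _)
    (by simpa [tsum_mul_left] using hmain.const_mul ((1 - κ) ^ 2)⁻¹) ?_
  intro n i hi
  rw [le_inv_mul_iff₀ hgap]
  exact sq_mul_sq_le_sq_sub hκ1 (hcontract n i hi)

open RealInnerProductSpace in
theorem stmt_19 {Λ : Type*} [Countable Λ]
    (a : lp (fun _ : Λ => ℝ) 2) (v : ℕ → lp (fun _ : Λ => ℝ) 2)
    (K κ : ℝ) (hκ0 : 0 < κ) (hκ1 : κ < 1)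
    (hK : ∀ n, ‖v n‖ ≤ K)
    (hweak : ∀ w : lp (fun _ : Λ => ℝ) 2,
      Filter.Tendsto (fun n => ⟪v n, w⟫) Filter.atTop (nhds 0))
    (S : ℝ → ℝ)
    (hS : ∀ x y : ℝ, |x| ≤ 2 * K → |y| ≤ 2 * K → |S x - S y| ≤ κ * |x - y|)
    (hmain : Filter.Tendsto
      (fun n => ∑' lam, (S (a lam + v n lam) - S (a lam) - v n lam) ^ 2)
      Filter.atTop (nhds 0)) :
    Filter.Tendsto (fun n => ‖v n‖) Filter.atTop (nhds 0) :=
  stmt_19_general a v K κ hκ1 hK hweak S hS hmain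
end
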